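/- arXiv:1603.07197 — 2 statements merged into one kernel-verified Lean document; each statement's English description precedes it below -/
import Mathlib

section
/- Let Γ, Γ' be finite simplicial graphs. Then the pro-2 completions of the right-angled Coxeter groups C(Γ) and C(Γ') are isomorphic as topological groups if and only if Γ ≅ Γ'. -/
open scoped commutatorElement in
/-- The defining relations of the right-angled Artin group on a graph `Γ`:
commutators of generators spanning an edge. -/
def raagRels {V : Type*} (Γ : SimpleGraph V) : Set (FreeGroup V) :=
  {r | ∃ v w : V, Γ.Adj v w ∧ r = ⁅FreeGroup.of v, FreeGroup.of w⁆}

/-- The right-angled Artin group `A(Γ)` of a graph `Γ`. -/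
def RAAG {V : Type*} (Γ : SimpleGraph V) : Type _ := PresentedGroup (raagRels Γ)

instance {V : Type*} (Γ : SimpleGraph V) : Group (RAAG Γ) :=
  QuotientGroup.Quotient.group _

/-- The generator of `A(Γ)` corresponding to a vertex. -/
def RAAG.gen {V : Type*} (Γ : SimpleGraph V) (v : V) : RAAG Γ :=
  PresentedGroup.of (rels := raagRels Γ) v

/-- The defining relations of the right-angled Coxeter group on a graph `Γ`:
edge commutators together with the squares of all generators. -/
def racgRels {V : Type*} (Γ : SimpleGraph V) : Set (FreeGroup V) :=
  raagRels Γ ∪ {r | ∃ v : V, r = (FreeGroup.of v) ^ 2}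

/-- The right-angled Coxeter group `C(Γ)` of a graph `Γ`. -/
def RACG {V : Type*} (Γ : SimpleGraph V) : Type _ := PresentedGroup (racgRels Γ)

instance {V : Type*} (Γ : SimpleGraph V) : Group (RACG Γ) :=
  QuotientGroup.Quotient.group _

/-- The generator of `C(Γ)` corresponding to a vertex. -/
def RACG.gen {V : Type*} (Γ : SimpleGraph V) (v : V) : RACG Γ :=
  PresentedGroup.of (rels := racgRels Γ) v

/-- A topological group is a pro-`p` group if it is a compact, Hausdorff, totally
disconnected topological group all of whose continuous finite quotients are `p`-groups. -/
structure IsProPGroup (p : ℕ) (K : Type*) [Group K] [TopologicalSpace K] : Prop where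
  topGroup : IsTopologicalGroup K
  compact : CompactSpace K
  t2 : T2Space K
  totallyDisconnected : TotallyDisconnectedSpace K
  quot_isPGroup : ∀ (N : Subgroup K) [N.Normal], IsOpen (N : Set K) → IsPGroup p (K ⧸ N)

/-- `ι : G →* K` exhibits the pro-`p` group `K` as the pro-`p` completion of the
discrete group `G`. -/
structure IsProPCompletion (p : ℕ) (G : Type*) [Group G] (K : Type*) [Group K]
    [TopologicalSpace K] (ι : G →* K) : Prop where
  proP : IsProPGroup p K
  dense : DenseRange ι
  universal : ∀ (F : Type) [Group F] [Finite F] [TopologicalSpace F] [DiscreteTopology F],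
    IsPGroup p F → ∀ f : G →* F, ∃! φ : K →* F, Continuous φ ∧ φ.comp ι = f

/-- The pull-back `P = {(g,h) ∈ G × H : ι g = π h}` of a pair of homomorphisms
`ι : G →* K`, `π : H →* K`, as a subgroup of `G × H`. -/
def extensionPullback {G H K : Type*} [Group G] [Group H] [Group K]
    (ι : G →* K) (π : H →* K) : Subgroup (G × H) where
  carrier := {x | ι x.1 = π x.2}
  one_mem' := by simp
  mul_mem' := by
    intro a b ha hb
    simp only [Set.mem_setOf_eq, Prod.fst_mul, Prod.snd_mul, map_mul] at *
    rw [ha, hb]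
  inv_mem' := by
    intro a ha
    simp only [Set.mem_setOf_eq, Prod.fst_inv, Prod.snd_inv, map_inv] at *
    rw [ha]

/-!
The mod-`2` abelianization `C(Γ) → 𝔽₂^V` lifts to a finite class-two `2`-group
`E(Γ) = NonEdgeExtension Γ`, a central extension of `𝔽₂^V` whose cocycle records the non-edges of
`Γ`: an element of `E(Γ)` squares to `1` exactly when its image in `𝔽₂^V` is supported on a
clique. A continuous isomorphism of pro-`2` completions turns `C(Γ) → E(Γ)` into a map
`C(Γ') → E(Γ)` whose image contains that of `C(Γ)`, and vice versa. Linearizing these maps gives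
surjections `𝔽₂^{V'} → 𝔽₂^V → 𝔽₂^{V'}` sending clique-supported vectors to clique-supported
vectors, hence an isomorphism matching the clique-supported vectors of the two graphs exactly.
Such an isomorphism induces a bijection between maximal cliques that preserves the size of every
intersection of maximal cliques, and counting the vertices lying in exactly a given family of
maximal cliques rebuilds the graph.

Conversely, a graph isomorphism gives `C(Γ) ≃* C(Γ')`, and two pro-`p` completions `K`, `K'` of the
same group are isomorphic: the closure of the diagonal image of the group in `K × K'` is the graph
of the isomorphism.
-/

section MaximalCliques

open Set

theorem SimpleGraph.adj_iff_exists_maximal_isClique {V : Type*} [Finite V] {G : SimpleGraph V}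
    {x y : V} :
    G.Adj x y ↔ x ≠ y ∧ ∃ M : {M : Set V // Maximal G.IsClique M}, x ∈ M.1 ∧ y ∈ M.1 := by
  refine ⟨fun h => ⟨h.ne, ?_⟩, fun ⟨hxy, M, hx, hy⟩ => M.2.prop hx hy hxy⟩
  obtain ⟨M, hle, hM⟩ := Finite.exists_le_maximal (G.isClique_pair.2 fun _ => h)
  exact ⟨⟨M, hM⟩, hle (mem_insert x _), hle (mem_insert_of_mem x rfl)⟩

variable {α β ι : Type*}

open scoped Classical in
theorem ncard_setOf_subset_eq_add_sum [Fintype α] [Fintype ι] (t : α → Set ι) (J : Set ι) :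
    {a | J ⊆ t a}.ncard =
      {a | t a = J}.ncard + ∑ K ∈ Finset.univ.filter (J < ·), {a | t a = K}.ncard := by
  have hfib := Finset.card_eq_sum_card_fiberwise (f := t) (s := Finset.univ.filter (J ⊆ t ·))
    (t := Finset.univ.filter (J ≤ ·)) (fun a ha => by simpa using ha)
  have hsplit : Finset.univ.filter (J ≤ ·) = insert J (Finset.univ.filter (J < ·)) := by
    ext K
    simp [le_iff_eq_or_lt, eq_comm]
  rw [hsplit, Finset.sum_insert (by simp)] at hfib
  simp only [ncard_eq_toFinset_card', toFinset_ofPred]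
  rw [hfib]
  congr 1
  · congr 1
    ext a
    simp +contextual
  · refine Finset.sum_congr rfl fun K hK => ?_
    congr 1
    ext a
    simp only [Finset.mem_filter, Finset.mem_univ, true_and] at hK ⊢
    exact ⟨fun h => h.2, fun h => ⟨h ▸ hK.le, h⟩⟩

open scoped Classical in
theorem exists_equiv_of_ncard_setOf_subset_eq [Finite α] [Finite β] [Finite ι]
    (t : α → Set ι) (t' : β → Set ι)
    (h : ∀ J, {a | J ⊆ t a}.ncard = {b | J ⊆ t' b}.ncard) :
    ∃ σ : α ≃ β, ∀ a, t' (σ a) = t a := by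
  have := Fintype.ofFinite α
  have := Fintype.ofFinite β
  have := Fintype.ofFinite ι
  -- Möbius inversion on the supersets of `J`, by downward induction on `J`.
  have hcell : ∀ J, {a | t a = J}.ncard = {b | t' b = J}.ncard := by
    intro J
    induction J using WellFoundedGT.induction with
    | _ J ih =>
      have hJ := h J
      rw [ncard_setOf_subset_eq_add_sum, ncard_setOf_subset_eq_add_sum,
        Finset.sum_congr rfl fun K hK => ih K (Finset.mem_filter.1 hK).2] at hJ
      exact Nat.add_right_cancel hJ
  have hfib : ∀ J, Nonempty ({a // t a = J} ≃ {b // t' b = J}) := fun J =>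
    Finite.card_eq.1 (hcell J)
  exact ⟨Equiv.ofFiberEquiv fun J => (hfib J).some, fun a => Equiv.ofFiberEquiv_map _ a⟩

theorem SimpleGraph.nonempty_iso_of_maximal_isClique_equiv {V V' : Type*} [Finite V] [Finite V']
    {G : SimpleGraph V} {G' : SimpleGraph V'}
    (μ : {M : Set V // Maximal G.IsClique M} ≃ {M : Set V' // Maximal G'.IsClique M})
    (hμ : ∀ J : Set {M : Set V // Maximal G.IsClique M},
      (⋂ M ∈ J, M.1).ncard = (⋂ M ∈ J, (μ M).1).ncard) :
    Nonempty (G ≃g G') := by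
  obtain ⟨σ, hσ⟩ := exists_equiv_of_ncard_setOf_subset_eq (fun x => {M | x ∈ M.1})
    (fun y => {M | y ∈ (μ M).1}) fun J => by
      convert hμ J using 2 <;> ext <;> simp [subset_def]
  have hmem : ∀ x M, σ x ∈ (μ M).1 ↔ x ∈ M.1 := fun x M => Set.ext_iff.1 (hσ x) M
  refine ⟨⟨σ, fun {x y} => ?_⟩⟩
  rw [adj_iff_exists_maximal_isClique, adj_iff_exists_maximal_isClique, σ.injective.ne_iff,
    ← μ.exists_congr_right]
  simp only [hmem]

end MaximalCliques

section CliqueVectors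

open Function Set

theorem Nat.card_subtype_support_subset {V R : Type*} [Finite V] [Zero R] (s : Set V) :
    Nat.card {c : V → R // support c ⊆ s} = Nat.card R ^ s.ncard := by
  classical
  let e : {c : V → R // support c ⊆ s} ≃ (s → R) :=
    { toFun c x := c.1 x
      invFun f := ⟨fun x => if h : x ∈ s then f ⟨x, h⟩ else 0, fun x hx => by
        by_contra h
        exact hx (dif_neg h)⟩
      left_inv c := by
        ext x
        by_cases h : x ∈ s
        · simp [h]
        · simpa [h] using (notMem_support.1 fun hx => h (c.2 hx)).symm
      right_inv f := by
        ext x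
        simp }
  rw [Nat.card_congr e, Nat.card_fun, Nat.card_coe_set_eq]

theorem bijective_and_mem_iff_of_surjective {X Y : Type*} [Finite X] [Finite Y] {f : X → Y}
    {g : Y → X} (hf : Surjective f) (hg : Surjective g) {s : Set X} {t : Set Y}
    (hfs : MapsTo f s t) (hgt : MapsTo g t s) : Bijective f ∧ ∀ x, f x ∈ t ↔ x ∈ s := by
  have hcard :=
    (Nat.card_le_card_of_surjective f hf).antisymm (Nat.card_le_card_of_surjective g hg)
  have hfb := hf.bijective_of_nat_card_le hcard.ge
  have hgb := hg.bijective_of_nat_card_le hcard.le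
  have himage : f '' s = t := eq_of_subset_of_ncard_le hfs.image_subset <| by
    rw [ncard_image_of_injective _ hfb.injective, ← ncard_image_of_injective t hgb.injective]
    exact ncard_le_ncard hgt.image_subset
  exact ⟨hfb, fun x => by rw [← himage, hfb.injective.mem_set_image]⟩

variable {V V' R : Type*} {Γ : SimpleGraph V} {Γ' : SimpleGraph V'}

theorem SimpleGraph.isClique_support_union [AddZeroClass R] {a b : V → R}
    (ha : Γ.IsClique (Function.support a)) (hb : Γ.IsClique (Function.support b))
    (hab : Γ.IsClique (Function.support (a + b))) :
    Γ.IsClique (Function.support a ∪ Function.support b) := by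
  have hl : ∀ {x}, x ∈ Function.support a → x ∉ Function.support b →
      x ∈ Function.support (a + b) := fun hxa hxb => by simpa [notMem_support.1 hxb] using hxa
  have hr : ∀ {x}, x ∉ Function.support a → x ∈ Function.support b →
      x ∈ Function.support (a + b) := fun hxa hxb => by simpa [notMem_support.1 hxa] using hxb
  rintro x (hxa | hxb) y (hya | hyb) hxy
  · exact ha hxa hya hxy
  · by_cases hxb : x ∈ Function.support b
    · exact hb hxb hyb hxy
    by_cases hya : y ∈ Function.support a
    · exact ha hxa hya hxy
    exact hab (hl hxa hxb) (hr hya hyb) hxy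
  · by_cases hxa : x ∈ Function.support a
    · exact ha hxa hya hxy
    by_cases hyb : y ∈ Function.support b
    · exact hb hxb hyb hxy
    exact hab (hr hxa hxb) (hl hya hyb) hxy
  · exact hb hxb hyb hxy

theorem SimpleGraph.exists_addEquiv_isClique_support_iff [Finite V] [Finite V'] [AddZeroClass R]
    [Finite R] (α : (V' → R) →+ (V → R)) (β : (V → R) →+ (V' → R)) (hα : Surjective α)
    (hβ : Surjective β)
    (hαc : ∀ c, Γ'.IsClique (Function.support c) → Γ.IsClique (Function.support (α c)))
    (hβc : ∀ b, Γ.IsClique (Function.support b) → Γ'.IsClique (Function.support (β b))) :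
    ∃ A : (V' → R) ≃+ (V → R),
      ∀ c, Γ'.IsClique (Function.support c) ↔ Γ.IsClique (Function.support (A c)) := by
  obtain ⟨hbij, hmem⟩ := bijective_and_mem_iff_of_surjective hα hβ
    (s := {c | Γ'.IsClique (Function.support c)}) (t := {b | Γ.IsClique (Function.support b)})
    hαc hβc
  exact ⟨AddEquiv.ofBijective α hbij, fun c => (hmem c).symm⟩

namespace AddEquiv

variable [AddZeroClass R] (A : (V' → R) ≃+ (V → R))

def supportImage (s : Set V') : Set V :=
  ⋃ (c : V' → R) (_ : support c ⊆ s), support (A c)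

variable {A}

theorem support_subset_supportImage {c : V' → R} {s : Set V'} (hc : support c ⊆ s) :
    support (A c) ⊆ A.supportImage s :=
  subset_biUnion_of_mem (u := fun c => support (A c)) hc

theorem supportImage_mono {s t : Set V'} (h : s ⊆ t) : A.supportImage s ⊆ A.supportImage t :=
  iUnion₂_subset fun _ hc => support_subset_supportImage (hc.trans h)

theorem subset_supportImage_symm_supportImage [Nontrivial R] (s : Set V') :
    s ⊆ A.symm.supportImage (A.supportImage s) := by
  classical
  intro u hu
  obtain ⟨r, hr⟩ := exists_ne (0 : R)
  have hsupp : support (Pi.single u r) = {u} := Pi.support_single_of_ne hr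
  refine support_subset_supportImage (c := A (Pi.single u r))
    (support_subset_supportImage (hsupp ▸ singleton_subset_iff.2 hu)) ?_
  rw [symm_apply_apply, hsupp]
  exact rfl

theorem isClique_supportImage
    (hA : ∀ c, Γ'.IsClique (support c) → Γ.IsClique (support (A c)))
    {s : Set V'} (hs : Γ'.IsClique s) : Γ.IsClique (A.supportImage s) := by
  have hclique : ∀ {c}, support c ⊆ s → Γ.IsClique (support (A c)) := fun hc =>
    hA _ (hs.subset hc)
  intro x hx y hy hxy
  simp only [supportImage, mem_iUnion] at hx hy
  obtain ⟨c, hc, hxc⟩ := hx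
  obtain ⟨d, hd, hyd⟩ := hy
  have hcd : support (c + d) ⊆ s := (support_add c d).trans (union_subset hc hd)
  exact SimpleGraph.isClique_support_union (hclique hc) (hclique hd)
    (map_add A c d ▸ hclique hcd) (Or.inl hxc) (Or.inr hyd) hxy

theorem ncard_le_ncard_supportImage [Finite V] [Finite V'] [Finite R] [Nontrivial R]
    (s : Set V') : s.ncard ≤ (A.supportImage s).ncard := by
  have hle : Nat.card {c : V' → R // support c ⊆ s} ≤
      Nat.card {b : V → R // support b ⊆ A.supportImage s} :=
    Nat.card_le_card_of_injective (fun c => ⟨A c, support_subset_supportImage c.2⟩)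
      fun c d h => Subtype.ext (A.injective (congrArg Subtype.val h))
  rw [Nat.card_subtype_support_subset, Nat.card_subtype_support_subset] at hle
  exact (Nat.pow_le_pow_iff_right Finite.one_lt_card).1 hle

theorem isClique_support_symm_iff
    (hA : ∀ c, Γ'.IsClique (support c) ↔ Γ.IsClique (support (A c))) (b : V → R) :
    Γ.IsClique (support b) ↔ Γ'.IsClique (support (A.symm b)) := by
  simpa using (hA (A.symm b)).symm

theorem maximal_isClique_supportImage [Nontrivial R]
    (hA : ∀ c, Γ'.IsClique (support c) ↔ Γ.IsClique (support (A c)))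
    {M : Set V'} (hM : Maximal Γ'.IsClique M) :
    Maximal Γ.IsClique (A.supportImage M) ∧ A.symm.supportImage (A.supportImage M) = M := by
  have hΦ := isClique_supportImage (fun c => (hA c).1) hM.prop
  have hΨ : ∀ {t}, Γ.IsClique t → Γ'.IsClique (A.symm.supportImage t) :=
    isClique_supportImage fun b => (isClique_support_symm_iff hA b).1
  have hΨΦ : A.symm.supportImage (A.supportImage M) = M :=
    (hM.eq_of_subset (hΨ hΦ) (subset_supportImage_symm_supportImage M)).symm
  refine ⟨⟨hΦ, fun t ht hMt => ?_⟩, hΨΦ⟩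
  have hΨt : A.symm.supportImage t = M :=
    (hM.eq_of_subset (hΨ ht) (hΨΦ ▸ supportImage_mono hMt)).symm
  simpa [hΨt] using subset_supportImage_symm_supportImage (A := A.symm) t

end AddEquiv

open AddEquiv in
theorem SimpleGraph.nonempty_iso_of_addEquiv [Finite V] [Finite V'] [Finite R] [AddZeroClass R]
    [Nontrivial R] (A : (V' → R) ≃+ (V → R))
    (hA : ∀ c, Γ'.IsClique (Function.support c) ↔ Γ.IsClique (Function.support (A c))) :
    Nonempty (Γ' ≃g Γ) := by
  have hA' := isClique_support_symm_iff hA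
  let μ : {M // Maximal Γ'.IsClique M} ≃ {M // Maximal Γ.IsClique M} :=
    { toFun M := ⟨A.supportImage M, (maximal_isClique_supportImage hA M.2).1⟩
      invFun M := ⟨A.symm.supportImage M, (maximal_isClique_supportImage hA' M.2).1⟩
      left_inv M := Subtype.ext (maximal_isClique_supportImage hA M.2).2
      right_inv M := Subtype.ext (by simpa using (maximal_isClique_supportImage hA' M.2).2) }
  refine nonempty_iso_of_maximal_isClique_equiv μ fun J => le_antisymm ?_ ?_
  · exact (ncard_le_ncard_supportImage _).trans (ncard_le_ncard (subset_iInter₂ fun M hM =>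
      supportImage_mono (biInter_subset_of_mem hM)))
  · calc (⋂ M ∈ J, (μ M).1).ncard
        ≤ (A.symm.supportImage (⋂ M ∈ J, (μ M).1)).ncard := ncard_le_ncard_supportImage _
      _ ≤ (⋂ M ∈ J, (μ.symm (μ M)).1).ncard := ncard_le_ncard (subset_iInter₂ fun M hM =>
          supportImage_mono (biInter_subset_of_mem (t := fun M => (μ M).1) hM))
      _ = (⋂ M ∈ J, M.1).ncard := by simp only [Equiv.symm_apply_apply]

end CliqueVectors

theorem Finset.noncommProd_sq_eq_one {ι G : Type*} [Monoid G] (s : Finset ι) (g : ι → G)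
    (comm : (s : Set ι).Pairwise (Function.onFun Commute g)) (h : ∀ i ∈ s, g i ^ 2 = 1) :
    s.noncommProd g comm ^ 2 = 1 := by
  rw [sq, ← Finset.noncommProd_mul_distrib g g comm comm comm,
    Finset.noncommProd_eq_pow_card _ (g * g) _ 1 fun i hi => (sq (g i)).symm.trans (h i hi),
    one_pow]

theorem ZMod.sum_smul_eq_sum_filter_ne_zero {ι M : Type*} [Fintype ι] [AddCommMonoid M]
    [Module (ZMod 2) M] (c : ι → ZMod 2) (a : ι → M) :
    ∑ i, c i • a i = ∑ i with c i ≠ 0, a i := by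
  rw [Finset.sum_filter]
  refine Finset.sum_congr rfl fun i _ => ?_
  rcases (by decide : ∀ z : ZMod 2, z = 0 ∨ z = 1) (c i) with h | h <;> simp [h]

namespace RACG

variable {V V' : Type*} {Γ : SimpleGraph V} {Γ' : SimpleGraph V'}

variable (Γ) in
theorem gen_sq (v : V) : gen Γ v ^ 2 = 1 :=
  (QuotientGroup.eq_one_iff _).2 (Subgroup.subset_normalClosure (Or.inr ⟨v, rfl⟩))

open scoped commutatorElement in
variable (Γ) in
theorem gen_commute {v w : V} (h : Γ.Adj v w) : Commute (gen Γ v) (gen Γ w) :=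
  commutatorElement_eq_one_iff_commute.1 <|
    (QuotientGroup.eq_one_iff _).2 (Subgroup.subset_normalClosure (Or.inl ⟨v, w, h, rfl⟩))

section lift

variable {G : Type*} [Group G]

open scoped commutatorElement in
def lift (f : V → G) (hsq : ∀ v, f v ^ 2 = 1)
    (hcomm : ∀ v w, Γ.Adj v w → Commute (f v) (f w)) : RACG Γ →* G :=
  PresentedGroup.toGroup (f := f) <| by
    rintro r (⟨v, w, hadj, rfl⟩ | ⟨v, rfl⟩)
    · simpa [commutatorElement_eq_one_iff_commute] using hcomm v w hadj
    · simpa using hsq v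

@[simp]
theorem lift_gen (f : V → G) (hsq : ∀ v, f v ^ 2 = 1)
    (hcomm : ∀ v w, Γ.Adj v w → Commute (f v) (f w)) (v : V) :
    lift f hsq hcomm (gen Γ v) = f v :=
  PresentedGroup.toGroup.of _

theorem hom_ext {φ ψ : RACG Γ →* G} (h : ∀ v, φ (gen Γ v) = ψ (gen Γ v)) : φ = ψ :=
  PresentedGroup.ext h

end lift

theorem induction_on {p : RACG Γ → Prop} (x : RACG Γ) (gen : ∀ v, p (gen Γ v)) (one : p 1)
    (mul : ∀ x y, p x → p y → p (x * y)) (inv : ∀ x, p x → p x⁻¹) : p x := by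
  have hx : x ∈ Subgroup.closure (Set.range (RACG.gen Γ)) :=
    (PresentedGroup.closure_range_of (racgRels Γ)).symm ▸ Subgroup.mem_top x
  induction hx using Subgroup.closure_induction with
  | mem _ h => obtain ⟨v, rfl⟩ := h; exact gen v
  | one => exact one
  | mul x y _ _ hx hy => exact mul x y hx hy
  | inv x _ hx => exact inv x hx

def map (φ : Γ →g Γ') : RACG Γ →* RACG Γ' :=
  lift (fun v => gen Γ' (φ v)) (fun v => gen_sq Γ' (φ v)) fun _ _ h => gen_commute Γ' (φ.map_adj h)

@[simp]
theorem map_gen (φ : Γ →g Γ') (v : V) : map φ (gen Γ v) = gen Γ' (φ v) :=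
  lift_gen _ _ _ v

def congr (φ : Γ ≃g Γ') : RACG Γ ≃* RACG Γ' :=
  MonoidHom.toMulEquiv (map φ.toHom) (map φ.symm.toHom) (hom_ext fun v => by simp)
    (hom_ext fun v => by simp)

end RACG

noncomputable section

open scoped Classical

variable {V V' : Type*} {Γ : SimpleGraph V} {Γ' : SimpleGraph V'}

def nonEdgeForm (Γ : SimpleGraph V) (a b : V → ZMod 2) : V → V → ZMod 2 :=
  fun x y => if Γᶜ.Adj x y then a x * b y else 0

@[ext]
structure NonEdgeExtension (Γ : SimpleGraph V) where
  vec : V → ZMod 2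
  central : V → V → ZMod 2

namespace NonEdgeExtension

instance : Mul (NonEdgeExtension Γ) :=
  ⟨fun g h => ⟨g.vec + h.vec, g.central + h.central + nonEdgeForm Γ g.vec h.vec⟩⟩

instance : One (NonEdgeExtension Γ) := ⟨⟨0, 0⟩⟩

instance : Inv (NonEdgeExtension Γ) :=
  ⟨fun g => ⟨g.vec, g.central + nonEdgeForm Γ g.vec g.vec⟩⟩

@[simp] theorem vec_mul (g h : NonEdgeExtension Γ) : (g * h).vec = g.vec + h.vec := rfl

@[simp] theorem central_mul (g h : NonEdgeExtension Γ) :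
    (g * h).central = g.central + h.central + nonEdgeForm Γ g.vec h.vec := rfl

@[simp] theorem vec_one : (1 : NonEdgeExtension Γ).vec = 0 := rfl

@[simp] theorem central_one : (1 : NonEdgeExtension Γ).central = 0 := rfl

@[simp] theorem vec_inv (g : NonEdgeExtension Γ) : g⁻¹.vec = g.vec := rfl

@[simp] theorem central_inv (g : NonEdgeExtension Γ) :
    g⁻¹.central = g.central + nonEdgeForm Γ g.vec g.vec := rfl

instance : Group (NonEdgeExtension Γ) where
  mul_assoc g h k := by
    ext x <;> try ext y
    all_goals simp only [vec_mul, central_mul, nonEdgeForm, Pi.add_apply]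
    · ring
    · split_ifs <;> ring
  one_mul g := by
    ext x <;> try ext y
    all_goals simp [nonEdgeForm]
  mul_one g := by
    ext x <;> try ext y
    all_goals simp [nonEdgeForm]
  inv_mul_cancel g := by
    ext x <;> try ext y
    all_goals simp only [vec_mul, central_mul, vec_inv, central_inv, vec_one, central_one,
      Pi.add_apply, Pi.zero_apply]
    all_goals grind

instance [Finite V] : Finite (NonEdgeExtension Γ) :=
  Finite.of_injective (fun g : NonEdgeExtension Γ => (g.vec, g.central)) fun _ _ hgh =>
    NonEdgeExtension.ext (congrArg Prod.fst hgh) (congrArg Prod.snd hgh)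

theorem sq_eq (g : NonEdgeExtension Γ) : g ^ 2 = ⟨0, nonEdgeForm Γ g.vec g.vec⟩ := by
  ext x <;> try ext y
  all_goals simp only [sq, vec_mul, central_mul, Pi.add_apply, Pi.zero_apply]
  all_goals grind

theorem sq_eq_one_iff (g : NonEdgeExtension Γ) :
    g ^ 2 = 1 ↔ Γ.IsClique (Function.support g.vec) := by
  rw [sq_eq, NonEdgeExtension.ext_iff]
  simp only [vec_one, central_one, true_and, funext_iff, nonEdgeForm, Pi.zero_apply,
    SimpleGraph.compl_adj]
  refine ⟨fun h x hx y hy hxy => ?_, fun h x y => ?_⟩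
  · by_contra hadj
    simpa [hxy, hadj, Function.mem_support.1 hx, Function.mem_support.1 hy] using h x y
  · split_ifs with hxy
    · by_contra hne
      obtain ⟨hx, hy⟩ := mul_ne_zero_iff.1 hne
      exact hxy.2 (h hx hy hxy.1)
    · rfl

theorem isPGroup : IsPGroup 2 (NonEdgeExtension Γ) := fun g =>
  ⟨2, by rw [pow_succ, pow_one, pow_mul, sq_eq, sq_eq]; ext <;> simp [nonEdgeForm]⟩

theorem vec_noncommProd {ι : Type*} (s : Finset ι) (g : ι → NonEdgeExtension Γ) (comm) :
    (s.noncommProd g comm).vec = ∑ i ∈ s, (g i).vec := by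
  induction s using Finset.induction_on with
  | empty => rfl
  | insert i s hi ih =>
    rw [Finset.noncommProd_insert_of_notMem _ _ _ _ hi, vec_mul, ih (comm.mono (by simp)),
      Finset.sum_insert hi]

def single (v : V) : NonEdgeExtension Γ := ⟨Pi.single v 1, 0⟩

theorem single_sq (v : V) : (single v : NonEdgeExtension Γ) ^ 2 = 1 := by
  rw [sq_eq_one_iff, single, Pi.support_single_of_ne one_ne_zero]
  exact Γ.isClique_singleton v

theorem nonEdgeForm_single_eq_zero {v w : V} (h : ¬Γᶜ.Adj v w) :
    nonEdgeForm Γ (Pi.single v 1) (Pi.single w 1) = 0 := by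
  funext x y
  simp only [nonEdgeForm, Pi.zero_apply, ite_eq_right_iff]
  intro hxy
  by_cases hx : x = v
  · by_cases hy : y = w
    · subst hx hy
      exact absurd hxy h
    · simp [hy]
  · simp [hx]

theorem commute_single {v w : V} (h : Γ.Adj v w) :
    Commute (single v : NonEdgeExtension Γ) (single w) := by
  ext x <;> try ext y
  · exact add_comm _ _
  · simp [single, nonEdgeForm_single_eq_zero, h, h.symm]

end NonEdgeExtension

def RACG.toNonEdgeExtension (Γ : SimpleGraph V) : RACG Γ →* NonEdgeExtension Γ :=
  RACG.lift NonEdgeExtension.single NonEdgeExtension.single_sq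
    fun _ _ h => NonEdgeExtension.commute_single h

@[simp]
theorem RACG.toNonEdgeExtension_gen (v : V) :
    RACG.toNonEdgeExtension Γ (RACG.gen Γ v) = NonEdgeExtension.single v :=
  RACG.lift_gen _ _ _ v

namespace NonEdgeExtension

variable [Fintype V'] (f : RACG Γ' →* NonEdgeExtension Γ)

def linearization : (V' → ZMod 2) →ₗ[ZMod 2] (V → ZMod 2) :=
  Fintype.linearCombination (ZMod 2) fun u => (f (RACG.gen Γ' u)).vec

theorem vec_mem_range_linearization (y : RACG Γ') :
    (f y).vec ∈ LinearMap.range (linearization f) := by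
  induction y using RACG.induction_on with
  | gen u => exact ⟨Pi.single u 1, by simp [linearization]⟩
  | one => simp
  | mul x y hx hy => simpa using add_mem hx hy
  | inv x hx => simpa using hx

theorem linearization_surjective [Finite V]
    (hf : (RACG.toNonEdgeExtension Γ).range ≤ f.range) :
    Function.Surjective (linearization f) := by
  rw [← LinearMap.range_eq_top, eq_top_iff, ← (Pi.basisFun (ZMod 2) V).span_eq,
    Submodule.span_le]
  rintro _ ⟨v, rfl⟩
  obtain ⟨y, hy⟩ := hf ⟨RACG.gen Γ v, rfl⟩
  simpa [hy, single] using vec_mem_range_linearization f y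

theorem isClique_support_linearization {c : V' → ZMod 2}
    (hc : Γ'.IsClique (Function.support c)) :
    Γ.IsClique (Function.support (linearization f c)) := by
  set s := Finset.univ.filter (c · ≠ 0)
  have comm : (s : Set V').Pairwise (Function.onFun Commute fun u => f (RACG.gen Γ' u)) :=
    fun u hu w hw huw => (RACG.gen_commute Γ' (hc (by simpa [s] using hu)
      (by simpa [s] using hw) huw)).map f
  have hvec : (s.noncommProd _ comm).vec = linearization f c := by
    rw [vec_noncommProd, linearization, Fintype.linearCombination_apply,
      ZMod.sum_smul_eq_sum_filter_ne_zero]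
  rw [← hvec, ← sq_eq_one_iff]
  exact Finset.noncommProd_sq_eq_one _ _ _ fun u _ => by rw [← map_pow, RACG.gen_sq, map_one]

end NonEdgeExtension

end

section ProP

open Set

variable {p : ℕ} {G G' K K' : Type} [Group G] [Group G'] [Group K] [TopologicalSpace K]
  [Group K'] [TopologicalSpace K'] {ι : G →* K} {ι' : G →* K'}

theorem IsProPCompletion.exists_range_le {ι' : G' →* K'} (hK : IsProPCompletion p G K ι)
    (hι' : DenseRange ι') (e : K ≃* K') (he : Continuous e.symm) {Q : Type} [Group Q] [Finite Q]
    (hQ : IsPGroup p Q) (g : G →* Q) : ∃ h : G' →* Q, g.range ≤ h.range := by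
  let _ : TopologicalSpace Q := ⊥
  have : DiscreteTopology Q := ⟨rfl⟩
  obtain ⟨φ, ⟨hφ, hφι⟩, -⟩ := hK.universal Q hQ g
  refine ⟨(φ.comp e.symm.toMonoidHom).comp ι', ?_⟩
  rintro _ ⟨x, rfl⟩
  obtain ⟨y, hy⟩ := hι'.exists_mem_open ((isOpen_discrete {g x}).preimage (hφ.comp he))
    ⟨e (ι x), by simp [← hφι]⟩
  exact ⟨y, hy⟩

theorem IsProPCompletion.comp_mulEquiv {ι' : G' →* K'} (hK' : IsProPCompletion p G' K' ι')
    (θ : G ≃* G') : IsProPCompletion p G K' (ι'.comp θ.toMonoidHom) where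
  proP := hK'.proP
  dense := by
    simpa only [DenseRange, MonoidHom.coe_comp, MulEquiv.coe_toMonoidHom,
      θ.surjective.range_comp] using hK'.dense
  universal F _ _ _ _ hF f := by
    refine existsUnique_congr (fun φ => and_congr_right fun _ => ?_) |>.1
      (hK'.universal F hF (f.comp θ.symm.toMonoidHom))
    refine ⟨fun h => MonoidHom.ext fun g => by simpa using DFunLike.congr_fun h (θ g),
      fun h => MonoidHom.ext fun g' => by simpa using DFunLike.congr_fun h (θ.symm g')⟩

theorem IsProPGroup.eq_of_forall_mk_eq (hK : IsProPGroup p K) {x y : K}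
    (h : ∀ N : OpenNormalSubgroup K, (x : K ⧸ N.toSubgroup) = y) : x = y := by
  have := hK.topGroup; have := hK.compact; have := hK.t2; have := hK.totallyDisconnected
  by_contra hne
  obtain ⟨N, hN⟩ := ProfiniteGrp.exist_openNormalSubgroup_sub_open_nhds_of_one
    (isOpen_compl_singleton (x := x⁻¹ * y)) (by simpa [eq_comm, inv_mul_eq_one] using hne)
  exact hN (QuotientGroup.eq.1 (h N)) rfl

theorem IsProPCompletion.eq_of_mem_closure_range (hK : IsProPCompletion p G K ι)
    (hK' : IsProPGroup p K') {k : K} {a b : K'}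
    (ha : (k, a) ∈ closure (range fun g => (ι g, ι' g)))
    (hb : (k, b) ∈ closure (range fun g => (ι g, ι' g))) : a = b := by
  have := hK'.topGroup; have := hK'.compact
  refine hK'.eq_of_forall_mk_eq fun N => ?_
  have : DiscreteTopology (K' ⧸ N.toSubgroup) := QuotientGroup.discreteTopology N.isOpen
  have : Finite (K' ⧸ N.toSubgroup) := N.toSubgroup.quotient_finite_of_isOpen N.isOpen
  obtain ⟨φ, ⟨hφ, hφι⟩, -⟩ := hK.universal _ (hK'.quot_isPGroup N N.isOpen)
    ((QuotientGroup.mk' N.toSubgroup).comp ι')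
  have hgraph : closure (range fun g => (ι g, ι' g)) ⊆ {x | φ x.1 = x.2} :=
    closure_minimal (by rintro _ ⟨g, rfl⟩; exact DFunLike.congr_fun hφι g)
      (isClosed_eq (hφ.comp continuous_fst) (continuous_quot_mk.comp continuous_snd))
  exact (hgraph ha).symm.trans (hgraph hb)

theorem exists_mem_closure_range [CompactSpace K] [CompactSpace K'] [T2Space K]
    (hι : DenseRange ι) (k : K) : ∃ k', (k, k') ∈ closure (range fun g => (ι g, ι' g)) := by
  have hclosed : IsClosed (Prod.fst '' closure (range fun g => (ι g, ι' g))) :=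
    (isClosed_closure.isCompact.image continuous_fst).isClosed
  have hsub : range ι ⊆ Prod.fst '' closure (range fun g => (ι g, ι' g)) := by
    rintro _ ⟨g, rfl⟩
    exact ⟨_, subset_closure ⟨g, rfl⟩, rfl⟩
  obtain ⟨x, hx, rfl⟩ := hclosed.closure_subset_iff.2 hsub (hι k)
  exact ⟨x.2, hx⟩

theorem swap_mem_closure_range {x : K × K'} (h : x ∈ closure (range fun g => (ι g, ι' g))) :
    x.swap ∈ closure (range fun g => (ι' g, ι g)) :=
  map_mem_closure continuous_swap h (by rintro _ ⟨g, rfl⟩; exact ⟨g, rfl⟩)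

theorem IsProPCompletion.exists_continuousMulEquiv (hK : IsProPCompletion p G K ι)
    (hK' : IsProPCompletion p G K' ι') : ∃ e : K ≃* K', Continuous e ∧ Continuous e.symm := by
  have := hK.proP.topGroup; have := hK.proP.compact; have := hK.proP.t2
  have := hK'.proP.topGroup; have := hK'.proP.compact; have := hK'.proP.t2
  let H : Subgroup (K × K') := (ι.prod ι').range.topologicalClosure
  have hH : ∀ x, x ∈ H ↔ x ∈ closure (range fun g => (ι g, ι' g)) := fun x => Iff.rfl
  have : CompactSpace H :=
    isCompact_iff_compactSpace.1 (ι.prod ι').range.isClosed_topologicalClosure.isCompact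
  have hfst : Function.Bijective ((MonoidHom.fst K K').comp H.subtype) := by
    refine ⟨?_, fun k => ?_⟩
    · rintro ⟨⟨k, a⟩, ha⟩ ⟨⟨k', b⟩, hb⟩ (rfl : k = k')
      simp only [Subtype.mk.injEq, Prod.mk.injEq, true_and]
      exact hK.eq_of_mem_closure_range hK'.proP ((hH _).1 ha) ((hH _).1 hb)
    · obtain ⟨k', hk'⟩ := exists_mem_closure_range (ι' := ι') hK.dense k
      exact ⟨⟨_, (hH _).2 hk'⟩, rfl⟩
  have hsnd : Function.Bijective ((MonoidHom.snd K K').comp H.subtype) := by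
    refine ⟨?_, fun k' => ?_⟩
    · rintro ⟨⟨a, k'⟩, ha⟩ ⟨⟨b, k''⟩, hb⟩ (rfl : k' = k'')
      simp only [Subtype.mk.injEq, Prod.mk.injEq, and_true]
      exact hK'.eq_of_mem_closure_range hK.proP (swap_mem_closure_range ((hH _).1 ha))
        (swap_mem_closure_range ((hH _).1 hb))
    · obtain ⟨k, hk⟩ := exists_mem_closure_range (ι' := ι) hK'.dense k'
      exact ⟨⟨(k, k'), (hH _).2 (by simpa using swap_mem_closure_range hk)⟩, rfl⟩
  let π₁ := MulEquiv.ofBijective _ hfst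
  let π₂ := MulEquiv.ofBijective _ hsnd
  have hπ₁ : Continuous π₁ := continuous_fst.comp continuous_subtype_val
  have hπ₂ : Continuous π₂ := continuous_snd.comp continuous_subtype_val
  exact ⟨π₁.symm.trans π₂, hπ₂.comp (hπ₁.continuous_symm_of_equiv_compact_to_t2 (f := π₁.toEquiv)),
    hπ₁.comp (hπ₂.continuous_symm_of_equiv_compact_to_t2 (f := π₂.toEquiv))⟩

end ProP

open NonEdgeExtension in
theorem RACG.nonempty_iso_of_continuousMulEquiv {V V' : Type} [Fintype V] [Fintype V']
    {Γ : SimpleGraph V} {Γ' : SimpleGraph V'} {K K' : Type} [Group K] [TopologicalSpace K]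
    [Group K'] [TopologicalSpace K'] {ι : RACG Γ →* K} {ι' : RACG Γ' →* K'}
    (hK : IsProPCompletion 2 (RACG Γ) K ι) (hK' : IsProPCompletion 2 (RACG Γ') K' ι')
    (e : K ≃* K') (he : Continuous e) (he' : Continuous e.symm) : Nonempty (Γ ≃g Γ') := by
  obtain ⟨f, hf⟩ := hK.exists_range_le hK'.dense e he' isPGroup (toNonEdgeExtension Γ)
  obtain ⟨f', hf'⟩ := hK'.exists_range_le hK.dense e.symm he isPGroup (toNonEdgeExtension Γ')
  obtain ⟨A, hA⟩ := SimpleGraph.exists_addEquiv_isClique_support_iff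
    (linearization f).toAddMonoidHom (linearization f').toAddMonoidHom
    (linearization_surjective f hf) (linearization_surjective f' hf')
    (fun _ => isClique_support_linearization f) (fun _ => isClique_support_linearization f')
  exact ⟨(SimpleGraph.nonempty_iso_of_addEquiv A hA).some.symm⟩

/-- Right-angled Coxeter groups are distinguished by their pro-`2`
completions: for finite graphs `Γ, Γ'`, the pro-`2` completions of `C(Γ)` and `C(Γ')`
are isomorphic as topological groups iff `Γ ≅ Γ'`. -/
theorem racg_pro2_rigidity {V V' : Type} [Fintype V] [Fintype V']
    (Γ : SimpleGraph V) (Γ' : SimpleGraph V')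
    (K K' : Type) [Group K] [TopologicalSpace K] [Group K'] [TopologicalSpace K']
    (ι : RACG Γ →* K) (ι' : RACG Γ' →* K')
    (hK : IsProPCompletion 2 (RACG Γ) K ι) (hK' : IsProPCompletion 2 (RACG Γ') K' ι') :
    (∃ e : K ≃* K', Continuous e ∧ Continuous e.symm) ↔ Nonempty (Γ ≃g Γ') :=
  ⟨fun ⟨e, he, he'⟩ => RACG.nonempty_iso_of_continuousMulEquiv hK hK' e he he',
    fun ⟨φ⟩ => hK.exists_continuousMulEquiv (hK'.comp_mulEquiv (RACG.congr φ))⟩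
end

section
/- Let Γ be a finite connected graph with at least one edge, and suppose the profinite completion Ĝ of G = A(Γ) acts on a profinite tree T with trivial edge stabilizers. If every element of Ẑ² acting on such a tree fixes a point whenever it is not a subgroup of Ẑ, then every vertex generator of Ĝ fixes a unique vertex of T, adjacent generators fix the same vertex, and hence by connectedness all of Ĝ fixes a vertex of T. -/
/-- A topological group is profinite if it is a compact, Hausdorff, totally disconnected
topological group. -/
structure IsProfiniteGroup (K : Type*) [Group K] [TopologicalSpace K] : Prop where
  topGroup : IsTopologicalGroup K
  compact : CompactSpace K
  t2 : T2Space K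
  totallyDisconnected : TotallyDisconnectedSpace K

/-- `ι : G →* K` exhibits the profinite group `K` as the profinite completion of the
discrete group `G`: it has dense range and every homomorphism from `G` to a finite group
(with the discrete topology) factors uniquely through `ι` as a continuous homomorphism. -/
structure IsProfiniteCompletion (G : Type*) [Group G] (K : Type*) [Group K]
    [TopologicalSpace K] (ι : G →* K) : Prop where
  profinite : IsProfiniteGroup K
  dense : DenseRange ι
  universal : ∀ (F : Type) [Group F] [Finite F] [TopologicalSpace F] [DiscreteTopology F],
    ∀ f : G →* F, ∃! φ : K →* F, Continuous φ ∧ φ.comp ι = f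

/-- A stand-in for "`A` is (isomorphic to) a closed subgroup of `Ẑ`": `A` is
topologically generated by one element and torsion-free. -/
def IsSubgroupOfZhat {K : Type*} [Group K] [TopologicalSpace K] [IsTopologicalGroup K]
    (A : Subgroup K) : Prop :=
  (∃ a ∈ A, (Subgroup.closure {a}).topologicalClosure = A) ∧
  ∀ x ∈ A, x ≠ 1 → ∀ n : ℕ, 0 < n → x ^ n ≠ 1

/-!
Adjacent generators `x`, `y` of `A(Γ)` commute, so the closure of `⟨x, y⟩` in `Ĝ` is a closed
abelian subgroup. It is not procyclic: the continuous extension of the mod-2 exponent sums of `x`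
and `y` maps it onto the Klein four-group, in which every cyclic subgroup has at most two elements.
Hence it fixes a point of `T`. Generators are nontrivial in `Ĝ`, so trivial edge stabilizers make
their fixed points unique and adjacent generators share theirs. By connectedness all generators fix
one point, and its stabilizer is closed and contains the dense image of `A(Γ)`, so it is `Ĝ`.
-/

open Subgroup MulAction

theorem SimpleGraph.Preconnected.forall_of_adj_imp {V : Type*} {G : SimpleGraph V}
    (hG : G.Preconnected) {p : V → Prop} (hp : ∀ ⦃u v⦄, G.Adj u v → p u → p v) {u : V}
    (hu : p u) (v : V) : p v := by
  induction (G.reachable_iff_reflTransGen u v).1 (hG u v) with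
  | refl => exact hu
  | tail _ hadj ih => exact hp hadj ih

theorem SimpleGraph.Connected.exists_adj_of_adj {V : Type*} {G : SimpleGraph V}
    (hG : G.Connected) {a b : V} (hab : G.Adj a b) (v : V) : ∃ w, G.Adj v w := by
  have : Nontrivial V := ⟨⟨a, b, hab.ne⟩⟩
  exact G.mem_support.1 (hG.preconnected.support_eq_univ ▸ Set.mem_univ v)

theorem Subgroup.isMulCommutative_topologicalClosure_closure {G : Type*} [Group G]
    [TopologicalSpace G] [IsTopologicalGroup G] [T2Space G] {s : Set G}
    (hs : ∀ x ∈ s, ∀ y ∈ s, x * y = y * x) :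
    IsMulCommutative (closure s).topologicalClosure := by
  have h : (closure s).topologicalClosure ≤ centralizer (centralizer s) :=
    topologicalClosure_minimal _ (closure_le_centralizer_centralizer s)
      (Set.isClosed_centralizer _)
  exact .of_setLike_mul_comm fun a ha b hb =>
    Set.centralizer_centralizer_comm_of_comm hs a (h ha) b (h hb)

theorem Subgroup.eq_top_of_isClosed_of_denseRange {G K : Type*} [Group G] [Group K]
    [TopologicalSpace K] {ι : G →* K} (hι : DenseRange ι) {H : Subgroup K}
    (hH : IsClosed (H : Set K)) {s : Set G} (hs : closure s = ⊤) (hsH : ∀ x ∈ s, ι x ∈ H) :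
    H = ⊤ := by
  have hrange : Set.range ι ⊆ H := by
    rintro _ ⟨x, rfl⟩
    have : closure s ≤ H.comap ι := (closure_le _).2 hsH
    exact this (hs ▸ mem_top x)
  exact eq_top_iff.2 fun g _ => closure_minimal hrange hH (hι g)

theorem MulAction.isClosed_stabilizer {K T : Type*} [Group K] [MulAction K T]
    [TopologicalSpace K] [TopologicalSpace T] [T2Space T] [ContinuousSMul K T] (t : T) :
    IsClosed (stabilizer K t : Set K) :=
  isClosed_eq (continuous_id.smul continuous_const) continuous_const

theorem Subgroup.eq_one_or_eq_of_mem_zpowers {G : Type*} [Group G] {c z : G} (hc : c ^ 2 = 1)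
    (hz : z ∈ zpowers c) : z = 1 ∨ z = c := by
  obtain ⟨n, rfl⟩ := mem_zpowers_iff.1 hz
  rw [zpow_eq_zpow_emod' n hc]
  rcases Int.emod_two_eq_zero_or_one n with h | h <;> simp [h]

namespace RAAG

variable {V : Type*} (Γ : SimpleGraph V)

open scoped commutatorElement in
theorem commute_gen {v w : V} (h : Γ.Adj v w) : Commute (gen Γ v) (gen Γ w) := by
  have : PresentedGroup.mk (raagRels Γ) ⁅FreeGroup.of v, FreeGroup.of w⁆ = 1 :=
    (QuotientGroup.eq_one_iff _).2 (subset_normalClosure ⟨v, w, h, rfl⟩)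
  rw [map_commutatorElement] at this
  exact commutatorElement_eq_one_iff_commute.1 this

theorem closure_range_gen : closure (Set.range (gen Γ)) = ⊤ :=
  PresentedGroup.closure_range_of _

def liftComm {F : Type*} [CommGroup F] (f : V → F) : RAAG Γ →* F :=
  PresentedGroup.toGroup (f := f) (by
    rintro _ ⟨v, w, -, rfl⟩
    rw [map_commutatorElement, commutatorElement_eq_one_iff_commute]
    exact Commute.all _ _)

@[simp]
theorem liftComm_gen {F : Type*} [CommGroup F] (f : V → F) (v : V) :
    liftComm Γ f (gen Γ v) = f v :=
  PresentedGroup.toGroup.of _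

def parity [DecidableEq V] (v : V) : RAAG Γ →* Multiplicative (ZMod 2) :=
  liftComm Γ (Pi.mulSingle v (.ofAdd 1))

end RAAG

section ZhatObstruction

variable {K : Type*} [Group K] [TopologicalSpace K] [IsTopologicalGroup K] {A : Subgroup K}
  {F : Type*} [Group F] [TopologicalSpace F] [DiscreteTopology F] {φ : K →* F}

theorem IsSubgroupOfZhat.exists_le_comap_zpowers (hA : IsSubgroupOfZhat A)
    (hφ : Continuous φ) : ∃ c : F, A ≤ (zpowers c).comap φ := by
  obtain ⟨⟨a, -, ha⟩, -⟩ := hA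
  have hclosed : IsClosed ((zpowers (φ a)).comap φ : Set K) :=
    (isClosed_discrete (zpowers (φ a) : Set F)).preimage hφ
  refine ⟨φ a, ha ▸ topologicalClosure_minimal _ ?_ hclosed⟩
  exact (closure_le _).2 (Set.singleton_subset_iff.2 (mem_zpowers _))

theorem not_isSubgroupOfZhat_of_map_ne (hF : ∀ c : F, c ^ 2 = 1) (hφ : Continuous φ)
    {x y : K} (hx : x ∈ A) (hy : y ∈ A) (hx₁ : φ x ≠ 1) (hy₁ : φ y ≠ 1)
    (hxy : φ x ≠ φ y) : ¬ IsSubgroupOfZhat A := by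
  intro hA
  obtain ⟨c, hc⟩ := hA.exists_le_comap_zpowers hφ
  have hxc := (eq_one_or_eq_of_mem_zpowers (hF c) (hc hx)).resolve_left hx₁
  have hyc := (eq_one_or_eq_of_mem_zpowers (hF c) (hc hy)).resolve_left hy₁
  exact hxy (hxc.trans hyc.symm)

end ZhatObstruction

namespace IsProfiniteCompletion

variable {G K : Type*} [Group G] [Group K] [TopologicalSpace K] {ι : G →* K}

theorem exists_continuous_extend (hK : IsProfiniteCompletion G K ι) {F : Type} [Group F]
    [Finite F] [TopologicalSpace F] [DiscreteTopology F] (f : G →* F) :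
    ∃ φ : K →* F, Continuous φ ∧ ∀ g, φ (ι g) = f g :=
  let ⟨φ, ⟨hφ, hφι⟩, _⟩ := hK.universal F f
  ⟨φ, hφ, DFunLike.congr_fun hφι⟩

variable {V : Type*} [DecidableEq V] {Γ : SimpleGraph V} {ι : RAAG Γ →* K}

theorem map_gen_ne_one (hK : IsProfiniteCompletion (RAAG Γ) K ι) (v : V) :
    ι (RAAG.gen Γ v) ≠ 1 := by
  obtain ⟨φ, -, hφι⟩ := hK.exists_continuous_extend (RAAG.parity Γ v)
  intro h
  have := hφι (RAAG.gen Γ v)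
  rw [h, map_one, RAAG.parity, RAAG.liftComm_gen, Pi.mulSingle_eq_same] at this
  exact absurd this (by decide)

theorem not_isSubgroupOfZhat_closure_pair [IsTopologicalGroup K]
    (hK : IsProfiniteCompletion (RAAG Γ) K ι) {v w : V} (hvw : v ≠ w) :
    ¬ IsSubgroupOfZhat
      (Subgroup.closure {ι (RAAG.gen Γ v), ι (RAAG.gen Γ w)}).topologicalClosure := by
  obtain ⟨φ, hφ, hφι⟩ :=
    hK.exists_continuous_extend ((RAAG.parity Γ v).prod (RAAG.parity Γ w))
  refine not_isSubgroupOfZhat_of_map_ne (by decide) hφ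
    (le_topologicalClosure _ (subset_closure (Set.mem_insert _ _)))
    (le_topologicalClosure _ (subset_closure (Set.mem_insert_of_mem _ rfl))) ?_ ?_ ?_ <;>
  simp [hφι, RAAG.parity, hvw, hvw.symm]

end IsProfiniteCompletion

theorem exists_common_fixed_of_commute {K T : Type*} [Group K] [TopologicalSpace K]
    [IsTopologicalGroup K] [T2Space K] [MulAction K T]
    (habelian : ∀ A : Subgroup K, IsClosed (A : Set K) →
      (∀ a ∈ A, ∀ b ∈ A, a * b = b * a) →
      (∃ t : T, ∀ a ∈ A, a • t = t) ∨ IsSubgroupOfZhat A)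
    {x y : K} (hxy : Commute x y)
    (hA : ¬ IsSubgroupOfZhat (Subgroup.closure {x, y}).topologicalClosure) :
    ∃ t : T, x • t = t ∧ y • t = t := by
  have hcomm : ∀ a ∈ ({x, y} : Set K), ∀ b ∈ ({x, y} : Set K), a * b = b * a := by
    rintro a (rfl | rfl) b (rfl | rfl)
    exacts [rfl, hxy.eq, hxy.eq.symm, rfl]
  have hA_comm :=
    isMulCommutative_iff_of_setLike.1 (isMulCommutative_topologicalClosure_closure hcomm)
  obtain ⟨t, ht⟩ := (habelian _ (isClosed_topologicalClosure _) hA_comm).resolve_right hA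
  exact ⟨t, ht x (le_topologicalClosure _ (subset_closure (Set.mem_insert _ _))),
    ht y (le_topologicalClosure _ (subset_closure (Set.mem_insert_of_mem _ rfl)))⟩

theorem raag_profinite_tree_fixed_point_general {V : Type} [DecidableEq V]
    (Γ : SimpleGraph V) (hconn : Γ.Connected) (hedge : ∃ v w : V, Γ.Adj v w)
    (K : Type) [Group K] [TopologicalSpace K] [IsTopologicalGroup K]
    (ι : RAAG Γ →* K) (hK : IsProfiniteCompletion (RAAG Γ) K ι)
    (T : Type) [TopologicalSpace T] [T2Space T] [MulAction K T]
    (hact : Continuous fun x : K × T => x.1 • x.2)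
    (hedgestab : ∀ g : K, ∀ t t' : T, g • t = t → g • t' = t' → g = 1 ∨ t = t')
    (habelian : ∀ A : Subgroup K, IsClosed (A : Set K) →
      (∀ a ∈ A, ∀ b ∈ A, a * b = b * a) →
      (∃ t : T, ∀ a ∈ A, a • t = t) ∨ IsSubgroupOfZhat A) :
    (∀ v : V, ∃! t : T, ι (RAAG.gen Γ v) • t = t) ∧
    (∀ v w : V, Γ.Adj v w →
      ∀ t : T, ι (RAAG.gen Γ v) • t = t → ι (RAAG.gen Γ w) • t = t) ∧
    ∃ t : T, ∀ g : K, g • t = t := by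
  have : T2Space K := hK.profinite.t2
  have : ContinuousSMul K T := ⟨hact⟩
  have fixed_unique (v : V) (t t' : T) (ht : ι (RAAG.gen Γ v) • t = t)
      (ht' : ι (RAAG.gen Γ v) • t' = t') : t = t' :=
    (hedgestab _ t t' ht ht').resolve_left (hK.map_gen_ne_one v)
  have common_fixed (v w : V) (h : Γ.Adj v w) :
      ∃ t : T, ι (RAAG.gen Γ v) • t = t ∧ ι (RAAG.gen Γ w) • t = t :=
    exists_common_fixed_of_commute habelian ((RAAG.commute_gen Γ h).map ι)
      (hK.not_isSubgroupOfZhat_closure_pair h.ne)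
  have adj_transfer (v w : V) (h : Γ.Adj v w) (t : T) (ht : ι (RAAG.gen Γ v) • t = t) :
      ι (RAAG.gen Γ w) • t = t := by
    obtain ⟨s, hvs, hws⟩ := common_fixed v w h
    rwa [fixed_unique v t s ht hvs]
  obtain ⟨v₀, w₀, h₀⟩ := hedge
  refine ⟨fun v => ?_, adj_transfer, ?_⟩
  · obtain ⟨w, hvw⟩ := hconn.exists_adj_of_adj h₀ v
    obtain ⟨s, hvs, -⟩ := common_fixed v w hvw
    exact ⟨s, hvs, fun t ht => fixed_unique v t s ht hvs⟩
  · obtain ⟨s, hs, -⟩ := common_fixed v₀ w₀ h₀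
    have hgen : ∀ u, ι (RAAG.gen Γ u) • s = s :=
      hconn.preconnected.forall_of_adj_imp (fun u w h => adj_transfer u w h s) hs
    have hstab := eq_top_of_isClosed_of_denseRange hK.dense (isClosed_stabilizer s)
      (RAAG.closure_range_gen Γ) (by rintro _ ⟨u, rfl⟩; exact hgen u)
    exact ⟨s, fun g => mem_stabilizer_iff.1 (hstab ▸ mem_top g)⟩

/-- Let `Γ` be a finite connected graph with at least one edge and let
`Ĝ` be the profinite completion of `G = A(Γ)`, acting (continuously) on a profinite
tree `T` with trivial edge stabilizers (so no nontrivial element fixes two distinct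
points). If every closed abelian subgroup of `Ĝ` either fixes a point of `T` or is a
subgroup of `Ẑ`, then every vertex generator of `Ĝ` fixes a unique vertex of `T`,
adjacent generators fix the same vertex, and hence by connectedness all of `Ĝ` fixes a
vertex of `T`. -/
theorem raag_profinite_tree_fixed_point {V : Type} [Fintype V] [DecidableEq V]
    (Γ : SimpleGraph V) (hconn : Γ.Connected) (hedge : ∃ v w : V, Γ.Adj v w)
    (K : Type) [Group K] [TopologicalSpace K] [IsTopologicalGroup K]
    (ι : RAAG Γ →* K) (hK : IsProfiniteCompletion (RAAG Γ) K ι)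
    (T : Type) [TopologicalSpace T] [CompactSpace T] [T2Space T]
    [TotallyDisconnectedSpace T] [MulAction K T]
    (hact : Continuous fun x : K × T => x.1 • x.2)
    (hedgestab : ∀ g : K, ∀ t t' : T, g • t = t → g • t' = t' → g = 1 ∨ t = t')
    (habelian : ∀ A : Subgroup K, IsClosed (A : Set K) →
      (∀ a ∈ A, ∀ b ∈ A, a * b = b * a) →
      (∃ t : T, ∀ a ∈ A, a • t = t) ∨ IsSubgroupOfZhat A) :
    (∀ v : V, ∃! t : T, ι (RAAG.gen Γ v) • t = t) ∧
    (∀ v w : V, Γ.Adj v w →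
      ∀ t : T, ι (RAAG.gen Γ v) • t = t → ι (RAAG.gen Γ w) • t = t) ∧
    ∃ t : T, ∀ g : K, g • t = t :=
  raag_profinite_tree_fixed_point_general Γ hconn hedge K ι hK T hact hedgestab habelian
end
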